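/- arXiv:1911.04725 — 2 statements merged into one kernel-verified Lean document; each statement's English description precedes it below -/
import Mathlib

section
/- (Key step in universal denominator proof) Let q ∈ K not be a root of unity and m a positive integer. Suppose h ∈ K[x] is a monic polynomial with h(0) ≠ 0, and A, B ∈ K[x] satisfy gcd(A(x), B(q^{sm}x)) = 1 for all s ∈ ℕ. If h(x) divides B(x)·h(q^m x) and h(q^m x) divides A(x)·h(x) in K[x], then h = 1. -/
/-!
Write `c = q ^ m`. Iterating `h(x) ∣ B(x) h(c x)` gives
`h(x) ∣ B(x) B(c x) ⋯ B(c^(n-1) x) · h(c^n x)`, and the same iteration applied to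
`h(x) ∣ A(c⁻¹ x) h(c⁻¹ x)` gives `h(x) ∣ A(c⁻¹ x) ⋯ A(c⁻ⁿ x) · h(c⁻ⁿ x)`.
Since `h(0) ≠ 0` and `c` has infinite order, the finitely many roots of `h` cannot contain a pair
`z, cⁿ z` for every `n > 0`, so for some `n` the polynomial `h(x)` is coprime to `h(cⁿ x)`, hence
also to `h(c⁻ⁿ x)`, and divides both products. Every `A(c^(-j-1) x)` is coprime to every
`B(cⁱ x)`, being a rescaling of the coprime pair `A(x), B(c^(i+j+1) x)`, so `h` is a unit.
-/

open Polynomial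

theorem pow_injective_of_not_isOfFinOrder₀ {G₀ : Type*} [GroupWithZero G₀] {c : G₀}
    (hc0 : c ≠ 0) (hc : ¬IsOfFinOrder c) : Function.Injective (c ^ · : ℕ → G₀) := by
  have hinj := injective_pow_iff_not_isOfFinOrder.2
    ((Units.isOfFinOrder_val (u := Units.mk0 c hc0)).not.1 hc)
  exact fun a b hab ↦ hinj (Units.ext (by simpa using hab))

namespace Polynomial

section CommSemiring

variable {R : Type*} [CommSemiring R]

theorem comp_C_mul_X_comp_C_mul_X (p : R[X]) (a b : R) :
    (p.comp (C a * X)).comp (C b * X) = p.comp (C (a * b) * X) := by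
  rw [comp_assoc, mul_comp, C_comp, X_comp, ← mul_assoc, ← C_mul]

theorem comp_C_mul_X_dvd_comp_C_mul_X {p q : R[X]} (hpq : p ∣ q) (c : R) :
    p.comp (C c * X) ∣ q.comp (C c * X) :=
  _root_.map_dvd (compRingHom (C c * X)) hpq

theorem _root_.IsCoprime.comp_C_mul_X {p q : R[X]} (hpq : IsCoprime p q) (c : R) :
    IsCoprime (p.comp (C c * X)) (q.comp (C c * X)) :=
  hpq.map (compRingHom (C c * X))

theorem dvd_prod_comp_C_pow_mul_X_mul {h b : R[X]} {c : R} (hd : h ∣ b * h.comp (C c * X))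
    (n : ℕ) :
    h ∣ (∏ i ∈ Finset.range n, b.comp (C (c ^ i) * X)) * h.comp (C (c ^ n) * X) := by
  induction n with
  | zero => simp
  | succ n ih =>
    have step : h.comp (C (c ^ n) * X) ∣
        b.comp (C (c ^ n) * X) * h.comp (C (c ^ (n + 1)) * X) := by
      simpa only [mul_comp, comp_C_mul_X_comp_C_mul_X, pow_succ']
        using comp_C_mul_X_dvd_comp_C_mul_X hd (c ^ n)
    rw [Finset.prod_range_succ, mul_assoc]
    exact ih.trans (mul_dvd_mul_left _ step)

theorem dvd_prod_comp_C_pow_mul_X {h b : R[X]} {c : R} (hd : h ∣ b * h.comp (C c * X)) {n : ℕ}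
    (hn : IsCoprime h (h.comp (C (c ^ n) * X))) :
    h ∣ ∏ i ∈ Finset.range n, b.comp (C (c ^ i) * X) :=
  hn.dvd_of_dvd_mul_right (dvd_prod_comp_C_pow_mul_X_mul hd n)

end CommSemiring

variable {K : Type*} [Field K]

theorem exists_isCoprime_comp_C_pow_mul_X {h : K[X]} (hh : h ≠ 0) (h0 : h.eval 0 ≠ 0) {c : K}
    (hc0 : c ≠ 0) (hc : ¬IsOfFinOrder c) :
    ∃ n, 0 < n ∧ IsCoprime h (h.comp (C (c ^ n) * X)) := by
  by_contra! hnot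
  let L := AlgebraicClosure K
  have common_root (n : ℕ) :
      ∃ z : L, aeval z h = 0 ∧ aeval (algebraMap K L (c ^ (n + 1)) * z) h = 0 := by
    have hnc := hnot (n + 1) n.succ_pos
    rw [isCoprime_iff_aeval_ne_zero_of_isAlgClosed K L] at hnc
    push Not at hnc
    simpa only [aeval_comp, map_mul, aeval_C, aeval_X] using hnc
  choose z hz hcz using common_root
  have hS := h.rootSet_finite L
  obtain ⟨a, b, hab, heq⟩ := (hS.prod hS).exists_lt_map_eq_of_forall_mem
    (f := fun n ↦ (z n, algebraMap K L (c ^ (n + 1)) * z n))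
    fun n ↦ Set.mk_mem_prod (mem_rootSet.2 ⟨hh, hz n⟩) (mem_rootSet.2 ⟨hh, hcz n⟩)
  simp only [Prod.mk.injEq] at heq
  have hza : z a ≠ 0 := by
    intro hza
    have hroot := hz a
    rw [hza, ← map_zero (algebraMap K L), aeval_algebraMap_apply_eq_algebraMap_eval] at hroot
    exact h0 ((algebraMap K L).injective hroot)
  have hpow : c ^ (a + 1) = c ^ (b + 1) := (algebraMap K L).injective <|
    mul_right_cancel₀ hza (by rw [heq.2, heq.1])
  exact hab.ne (Nat.succ_injective (pow_injective_of_not_isOfFinOrder₀ hc0 hc hpow))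

theorem isCoprime_comp_comp_of_forall_isCoprime {A B : K[X]} {c : K} (hc0 : c ≠ 0)
    (hcop : ∀ s : ℕ, IsCoprime A (B.comp (C (c ^ s) * X))) (i j : ℕ) :
    IsCoprime ((A.comp (C c⁻¹ * X)).comp (C (c⁻¹ ^ j) * X)) (B.comp (C (c ^ i) * X)) := by
  have hshift := (hcop (i + j + 1)).comp_C_mul_X (c⁻¹ * c⁻¹ ^ j)
  rwa [comp_C_mul_X_comp_C_mul_X, ← comp_C_mul_X_comp_C_mul_X A,
    show c ^ (i + j + 1) * (c⁻¹ * c⁻¹ ^ j) = c ^ i by rw [inv_pow]; field_simp; ring] at hshift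

end Polynomial

theorem stmt13_general {K : Type*} [Field K] (q : K) (hq : q ≠ 0)
    (hroot : ∀ ℓ : ℤ, ℓ ≠ 0 → q ^ ℓ ≠ 1)
    (m : ℕ) (hm : 0 < m) (h A B : Polynomial K)
    (hmonic : h.Monic) (h0 : h.eval 0 ≠ 0)
    (hcop : ∀ s : ℕ, IsCoprime A (B.comp (C (q ^ (s * m)) * X)))
    (hd1 : h ∣ B * h.comp (C (q ^ m) * X))
    (hd2 : h.comp (C (q ^ m) * X) ∣ A * h) :
    h = 1 := by
  set c := q ^ m
  have hc0 : c ≠ 0 := pow_ne_zero m hq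
  have hc : ¬IsOfFinOrder c := fun hfin ↦ by
    obtain ⟨k, hk, hck⟩ := isOfFinOrder_iff_pow_eq_one.1 hfin
    exact hroot (m * k : ℕ) (by exact_mod_cast (Nat.mul_pos hm hk).ne')
      (by rwa [zpow_natCast, pow_mul])
  obtain ⟨n, -, hn⟩ := exists_isCoprime_comp_C_pow_mul_X hmonic.ne_zero h0 hc0 hc
  have hn_inv : IsCoprime h (h.comp (C (c⁻¹ ^ n) * X)) := by
    have hscaled := (hn.comp_C_mul_X (c⁻¹ ^ n)).symm
    rwa [comp_C_mul_X_comp_C_mul_X, ← mul_pow, mul_inv_cancel₀ hc0, one_pow, C_1, one_mul,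
      comp_X] at hscaled
  have hd2_inv : h ∣ A.comp (C c⁻¹ * X) * h.comp (C c⁻¹ * X) := by
    have hscaled := comp_C_mul_X_dvd_comp_C_mul_X hd2 c⁻¹
    rwa [mul_comp, comp_C_mul_X_comp_C_mul_X, mul_inv_cancel₀ hc0, C_1, one_mul, comp_X]
      at hscaled
  have hAB := IsCoprime.prod_left fun j (_ : j ∈ Finset.range n) ↦
    IsCoprime.prod_right fun i (_ : i ∈ Finset.range n) ↦
      isCoprime_comp_comp_of_forall_isCoprime hc0 (fun s ↦ by simpa only [pow_mul'] using hcop s)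
        i j
  exact hmonic.isUnit_iff.1 <| hAB.isUnit_of_dvd' (dvd_prod_comp_C_pow_mul_X hd2_inv hn_inv)
    (dvd_prod_comp_C_pow_mul_X hd1 hn)

theorem stmt13 {K : Type*} [Field K] [CharZero K] (q : K) (hq : q ≠ 0)
    (hroot : ∀ ℓ : ℤ, ℓ ≠ 0 → q ^ ℓ ≠ 1)
    (m : ℕ) (hm : 0 < m) (h A B : Polynomial K)
    (hmonic : h.Monic) (h0 : h.eval 0 ≠ 0)
    (hcop : ∀ s : ℕ, IsCoprime A (B.comp (C (q ^ (s * m)) * X)))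
    (hd1 : h ∣ B * h.comp (C (q ^ m) * X))
    (hd2 : h.comp (C (q ^ m) * X) ∣ A * h) :
    h = 1 :=
  stmt13_general q hq hroot m hm h A B hmonic h0 hcop hd1 hd2
end

section
/- (Degree bound for solutions, upper bound) Let A, B, C ∈ K[x] be nonzero with leading terms a_{ℓ1}x^{ℓ1}, b_{ℓ1}x^{ℓ1}, c_{ℓ2}x^{ℓ2} respectively, where b_{ℓ1} = a_{ℓ1}·q^{m(ℓ0+ℓ2)}, and let a(x,y) ∈ K[x,y] with deg_x(a) = ℓ3 and deg_y(a) < λ. Suppose p̂(x,y) ∈ K[x, x^{-1}][y] with deg_y(p̂) < λ satisfies a(x,y)·C(x) = q^{-vj}·A(x)·p̂(q^m x, q^{-n} y) - B(q^{-m}x)·p̂(x,y), for integers m > 0, n, v, j ≥ 1, ℓ0. Then the highest x-degree ℓ of p̂ satisfies ℓ ≤ max{ ℓ2 + ℓ3 - ℓ1, ℓ0 - ℓ1 + ℓ2 + vj/m, ℓ0 - ℓ1 + ℓ2 + (vj + n(λ-1))/m }. -/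
/-!
Write `P = ∑ pᵢ(y) xⁱ` with `ℓ = deg_x P`, so that `p̂ = x⁻ᴺ P`. The left-hand side `C·a·xᴺ` has
`x`-degree at most `ℓ2 + ℓ3 + N`, and the right-hand side at most `ℓ1 + ℓ`. If `ℓ1 + ℓ` exceeds
the former, the coefficient of `x^(ℓ1+ℓ)` on the right must vanish; it equals
`(q^(-vj-mN+mℓ) lc(A) p_ℓ(q⁻ⁿy) - q^(-mℓ1) lc(B) p_ℓ(y))`. Comparing the coefficients of `yᵏ`,
`k = deg_y p_ℓ < λ`, and using that `q` is not a root of unity, this forces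
`m(ℓ - N) = m(ℓ0 - ℓ1 + ℓ2) + vj + nk`. The right-hand side is affine in `k ∈ [0, λ-1]`, so it is
bounded by its value at one of the endpoints.
-/

open Polynomial

noncomputable section

/-- The substitution `x ↦ c·x` on `K[y][x]`. -/
noncomputable def scaleX {K : Type*} [CommRing K] (c : K)
    (P : Polynomial (Polynomial K)) : Polynomial (Polynomial K) :=
  P.comp (C (C c) * X)

/-- The substitution `y ↦ c·y` on `K[y][x]`, acting on the coefficients. -/
noncomputable def scaleY {K : Type*} [CommRing K] (c : K)
    (P : Polynomial (Polynomial K)) : Polynomial (Polynomial K) :=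
  P.map ((aeval (C c * X) : Polynomial K →ₐ[K] Polynomial K).toRingHom)

/-- The embedding `K[x] → K[y][x]`. -/
noncomputable def ux {K : Type*} [CommRing K] : Polynomial K →+* Polynomial (Polynomial K) :=
  Polynomial.mapRingHom (C : K →+* Polynomial K)

section Substitutions

variable {R : Type*} [CommRing R]

lemma coeff_scaleX (c : R) (P : R[X][X]) (i : ℕ) :
    (scaleX c P).coeff i = P.coeff i * C c ^ i :=
  comp_C_mul_X_coeff

lemma coeff_coeff_scaleY (c : R) (P : R[X][X]) (i k : ℕ) :
    ((scaleY c P).coeff i).coeff k = (P.coeff i).coeff k * c ^ k := by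
  rw [scaleY, coeff_map]
  exact comp_C_mul_X_coeff

lemma coeff_ux (f : R[X]) (i : ℕ) : (ux f).coeff i = C (f.coeff i) :=
  coeff_map _ _

lemma natDegree_scaleX_le (c : R) (P : R[X][X]) : (scaleX c P).natDegree ≤ P.natDegree :=
  natDegree_le_iff_coeff_eq_zero.mpr fun i hi => by
    rw [coeff_scaleX, coeff_eq_zero_of_natDegree_lt hi, zero_mul]

lemma coeff_coeff_sub_at_top (s u c w : R) {A B : R[X]} (hB : B.natDegree = A.natDegree)
    (P : R[X][X]) (k : ℕ) :
    ((C (C s) * ux A * scaleY c (scaleX u P) - scaleX w (ux B) * P).coeff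
        (A.natDegree + P.natDegree)).coeff k =
      (s * A.leadingCoeff * u ^ P.natDegree * c ^ k - B.leadingCoeff * w ^ A.natDegree) *
        (P.coeff P.natDegree).coeff k := by
  have hA : (C (C s) * ux A).natDegree ≤ A.natDegree :=
    natDegree_C_mul_le _ _ |>.trans natDegree_map_le
  have hQ : (scaleY c (scaleX u P)).natDegree ≤ P.natDegree :=
    natDegree_map_le.trans (natDegree_scaleX_le u P)
  have hB' : (scaleX w (ux B)).natDegree ≤ A.natDegree :=
    (natDegree_scaleX_le w _).trans (hB ▸ natDegree_map_le)
  rw [coeff_sub, coeff_mul_add_eq_of_natDegree_le hA hQ,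
    coeff_mul_add_eq_of_natDegree_le hB' le_rfl, coeff_C_mul, coeff_ux, coeff_scaleX, coeff_ux,
    ← C_mul, ← C_pow, ← C_mul, coeff_sub, coeff_C_mul, coeff_C_mul, coeff_coeff_scaleY,
    coeff_scaleX, ← C_pow, coeff_mul_C, leadingCoeff, leadingCoeff, hB]
  ring

end Substitutions

lemma zpow_injective_of_forall_zpow_ne_one {K : Type*} [GroupWithZero K] {q : K} (hq : q ≠ 0)
    (hroot : ∀ ℓ : ℤ, ℓ ≠ 0 → q ^ ℓ ≠ 1) : Function.Injective (q ^ · : ℤ → K) := by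
  intro a b hab
  by_contra hne
  refine hroot (a - b) (sub_ne_zero.mpr hne) ?_
  rw [zpow_sub₀ hq, div_eq_one_iff_eq (zpow_ne_zero _ hq)]
  exact hab

lemma le_max_of_eq_add_div {x c w n k L m : ℚ} (hm : 0 < m) (hk0 : 0 ≤ k) (hkL : k ≤ L)
    (hx : x = c + (w + n * k) / m) : x ≤ max (c + w / m) (c + (w + n * L) / m) := by
  rcases le_total 0 n with hn | hn
  · refine le_max_of_le_right ?_
    rw [hx]
    gcongr
  · refine le_max_of_le_left ?_
    rw [hx, add_le_add_iff_left, div_le_div_iff_of_pos_right hm]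
    nlinarith

lemma exponent_eq_of_coeff_top_eq_zero {K : Type*} [Field K] {q : K} (hq : q ≠ 0)
    (hroot : ∀ ℓ : ℤ, ℓ ≠ 0 → q ^ ℓ ≠ 1) (m : ℕ) (n e E : ℤ) {A B : K[X]} (hA : A ≠ 0)
    (hdB : B.natDegree = A.natDegree) (hlc : B.leadingCoeff = A.leadingCoeff * q ^ E)
    {P : K[X][X]} (hP : P ≠ 0)
    (htop : (C (C (q ^ e)) * ux A * scaleY (q ^ (-n)) (scaleX (q ^ m) P) -
        scaleX (q ^ (-(m : ℤ))) (ux B) * P).coeff (A.natDegree + P.natDegree) = 0) :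
    e + m * P.natDegree - n * (P.coeff P.natDegree).natDegree = E - m * A.natDegree := by
  set ℓ := P.natDegree
  set k := (P.coeff ℓ).natDegree
  have hPk : (P.coeff ℓ).coeff k ≠ 0 := leadingCoeff_ne_zero.mpr (leadingCoeff_ne_zero.mpr hP)
  have hcoeff : (q ^ e * A.leadingCoeff * (q ^ m) ^ ℓ * (q ^ (-n)) ^ k -
      A.leadingCoeff * q ^ E * (q ^ (-(m : ℤ))) ^ A.natDegree) * (P.coeff ℓ).coeff k = 0 := by
    rw [← hlc, ← coeff_coeff_sub_at_top _ _ _ _ hdB, htop, coeff_zero]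
  have hpow : q ^ e * (q ^ m) ^ ℓ * (q ^ (-n)) ^ k = q ^ E * (q ^ (-(m : ℤ))) ^ A.natDegree := by
    refine mul_left_cancel₀ (leadingCoeff_ne_zero.mpr hA) ?_
    linear_combination (mul_eq_zero.mp hcoeff).resolve_right hPk
  refine zpow_injective_of_forall_zpow_ne_one hq hroot ?_
  simp only [← zpow_natCast, ← zpow_mul, ← zpow_add₀ hq] at hpow
  simpa only [sub_eq_add_neg, mul_comm, neg_mul, mul_neg] using hpow

theorem stmt15_general {K : Type*} [Field K] (q : K) (hq : q ≠ 0)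
    (hroot : ∀ ℓ : ℤ, ℓ ≠ 0 → q ^ ℓ ≠ 1)
    (m : ℕ) (hm : 0 < m) (n v : ℤ) (j : ℕ)
    (A B Cc : Polynomial K) (hA : A ≠ 0)
    (ℓ1 ℓ2 ℓ3 lam : ℕ) (ℓ0 : ℤ)
    (hdA : A.natDegree = ℓ1) (hdB : B.natDegree = ℓ1) (hdC : Cc.natDegree = ℓ2)
    (hlc : B.leadingCoeff = A.leadingCoeff * q ^ ((m : ℤ) * (ℓ0 + (ℓ2 : ℤ))))
    (a : Polynomial (Polynomial K)) (hda : a.natDegree = ℓ3)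
    (P : Polynomial (Polynomial K)) (hP : P ≠ 0) (N : ℕ)
    (hPy : ∀ i, (P.coeff i).degree < (lam : WithBot ℕ))
    (heq : ux Cc * a * X ^ N =
        C (C (q ^ (-(v * (j : ℤ)) - (m : ℤ) * (N : ℤ)))) * ux A *
            scaleY (q ^ (-n)) (scaleX (q ^ m) P) -
          scaleX (q ^ (-(m : ℤ))) (ux B) * P) :
    (P.natDegree : ℚ) - (N : ℚ) ≤
      max (max ((ℓ2 : ℚ) + (ℓ3 : ℚ) - (ℓ1 : ℚ))
          ((ℓ0 : ℚ) - (ℓ1 : ℚ) + (ℓ2 : ℚ) + (v : ℚ) * (j : ℚ) / (m : ℚ)))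
        ((ℓ0 : ℚ) - (ℓ1 : ℚ) + (ℓ2 : ℚ) +
          ((v : ℚ) * (j : ℚ) + (n : ℚ) * ((lam : ℚ) - 1)) / (m : ℚ)) := by
  set ℓ := P.natDegree
  set k := (P.coeff ℓ).natDegree
  have hlhs : (ux Cc * a * X ^ N).natDegree ≤ ℓ2 + ℓ3 + N := by
    refine natDegree_mul_le.trans (add_le_add (natDegree_mul_le.trans ?_) (natDegree_X_pow_le N))
    exact add_le_add (hdC ▸ natDegree_map_le) hda.le
  by_cases hdeg : ℓ1 + ℓ ≤ ℓ2 + ℓ3 + N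
  · refine le_max_of_le_left (le_max_of_le_left ?_)
    have : (ℓ1 : ℚ) + ℓ ≤ ℓ2 + ℓ3 + N := by exact_mod_cast hdeg
    linarith
  have hexp := exponent_eq_of_coeff_top_eq_zero hq hroot m n _ _ hA (hdB.trans hdA.symm) hlc hP
    (by rw [← heq, hdA]; exact coeff_eq_zero_of_natDegree_lt (by omega))
  have hk : k < lam := (natDegree_lt_iff_degree_lt (leadingCoeff_ne_zero.mpr hP)).mpr (hPy ℓ)
  have hmQ : (0 : ℚ) < m := by exact_mod_cast hm
  have hℓ : (ℓ : ℚ) - N = ℓ0 - ℓ1 + ℓ2 + (v * j + n * k) / m := by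
    rw [hdA] at hexp
    field_simp
    qify at hexp
    linarith
  refine (le_max_of_eq_add_div hmQ k.cast_nonneg ?_ hℓ).trans
    (max_le_max (le_max_right _ _) le_rfl)
  have : (k : ℚ) + 1 ≤ lam := by exact_mod_cast hk
  linarith

theorem stmt15 {K : Type*} [Field K] [CharZero K] (q : K) (hq : q ≠ 0)
    (hroot : ∀ ℓ : ℤ, ℓ ≠ 0 → q ^ ℓ ≠ 1)
    (m : ℕ) (hm : 0 < m) (n v : ℤ) (j : ℕ) (hj : 1 ≤ j)
    (A B Cc : Polynomial K) (hA : A ≠ 0) (hB : B ≠ 0) (hC : Cc ≠ 0)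
    (ℓ1 ℓ2 ℓ3 lam : ℕ) (ℓ0 : ℤ) (hlam : 1 ≤ lam)
    (hdA : A.natDegree = ℓ1) (hdB : B.natDegree = ℓ1) (hdC : Cc.natDegree = ℓ2)
    (hlc : B.leadingCoeff = A.leadingCoeff * q ^ ((m : ℤ) * (ℓ0 + (ℓ2 : ℤ))))
    (a : Polynomial (Polynomial K)) (hda : a.natDegree = ℓ3)
    (hay : ∀ i, (a.coeff i).degree < (lam : WithBot ℕ))
    (P : Polynomial (Polynomial K)) (hP : P ≠ 0) (N : ℕ)
    (hPy : ∀ i, (P.coeff i).degree < (lam : WithBot ℕ))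
    (heq : ux Cc * a * X ^ N =
        C (C (q ^ (-(v * (j : ℤ)) - (m : ℤ) * (N : ℤ)))) * ux A *
            scaleY (q ^ (-n)) (scaleX (q ^ m) P) -
          scaleX (q ^ (-(m : ℤ))) (ux B) * P) :
    (P.natDegree : ℚ) - (N : ℚ) ≤
      max (max ((ℓ2 : ℚ) + (ℓ3 : ℚ) - (ℓ1 : ℚ))
          ((ℓ0 : ℚ) - (ℓ1 : ℚ) + (ℓ2 : ℚ) + (v : ℚ) * (j : ℚ) / (m : ℚ)))
        ((ℓ0 : ℚ) - (ℓ1 : ℚ) + (ℓ2 : ℚ) +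
          ((v : ℚ) * (j : ℚ) + (n : ℚ) * ((lam : ℚ) - 1)) / (m : ℚ)) :=
  stmt15_general q hq hroot m hm n v j A B Cc hA ℓ1 ℓ2 ℓ3 lam ℓ0 hdA hdB hdC hlc a hda P hP N hPy
    heq
end
end
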